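/- Let T be a κ-strict pseudo-contraction with a fixed point p, and (xₙ) the Mann iteration with λₙ ∈ (κ,1) satisfying ∑ (λₙ-κ)(1-λₙ) = ∞. Then lim_{n→∞} ‖xₙ - Txₙ‖ = 0. -/

import Mathlib

/-!
Write `A = I - T`. The pseudo-contraction inequality says that `A` is monotone in the quantitative
form `(1 - κ) ‖Au - Av‖² ≤ 2 ⟪u - v, Au - Av⟫`. Since a Mann step moves `x` by `-(1 - λ) A x`,
this makes the residual `‖x - Tx‖` nonincreasing along the iteration. Expanding the square of a
convex combination gives the Fejér-type descent
`‖xₙ₊₁ - p‖² ≤ ‖xₙ - p‖² - (λₙ - κ)(1 - λₙ) ‖xₙ - Txₙ‖²`, so `∑ (λₙ - κ)(1 - λₙ) ‖xₙ - Txₙ‖²`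
is bounded by `‖x₀ - p‖²`. A nonincreasing nonnegative sequence with bounded weighted sums,
for weights whose sum diverges, tends to zero.
-/

open RealInnerProductSpace Filter Topology Finset

section Real

theorem sum_mul_le_of_le_sub {a c e : ℕ → ℝ} (ha : ∀ n, 0 ≤ a n)
    (h : ∀ n, a (n + 1) ≤ a n - c n * e n) (N : ℕ) :
    ∑ n ∈ range N, c n * e n ≤ a 0 := by
  have htel : ∑ n ∈ range N, c n * e n ≤ ∑ n ∈ range N, (a n - a (n + 1)) :=
    sum_le_sum fun n _ => by linarith [h n]
  rw [sum_range_sub'] at htel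
  linarith [ha N]

theorem tendsto_zero_of_antitone_of_sum_mul_le {c e : ℕ → ℝ} {B : ℝ} (he : Antitone e)
    (he0 : ∀ n, 0 ≤ e n) (hc : ∀ n, 0 ≤ c n) (hsum : ∀ N, ∑ n ∈ range N, c n * e n ≤ B)
    (hdiv : Tendsto (fun N => ∑ n ∈ range N, c n) atTop atTop) :
    Tendsto e atTop (𝓝 0) := by
  have hbound : ∀ N, e N * ∑ n ∈ range N, c n ≤ B := fun N =>
    calc e N * ∑ n ∈ range N, c n = ∑ n ∈ range N, c n * e N := by rw [mul_sum]; simp [mul_comm]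
      _ ≤ ∑ n ∈ range N, c n * e n :=
        sum_le_sum fun n hn => mul_le_mul_of_nonneg_left (he (mem_range.mp hn).le) (hc n)
      _ ≤ B := hsum N
  have hinv : Tendsto (fun N => B * (∑ n ∈ range N, c n)⁻¹) atTop (𝓝 0) := by
    simpa using hdiv.inv_tendsto_atTop.const_mul B
  refine squeeze_zero' (.of_forall he0) ?_ hinv
  filter_upwards [hdiv.eventually_gt_atTop 0] with N hN
  rw [← div_eq_mul_inv, le_div_iff₀ hN]
  exact hbound N

end Real

section InnerProductSpace

variable {H : Type*} [NormedAddCommGroup H] [InnerProductSpace ℝ H]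

theorem norm_smul_add_one_sub_smul_sq (l : ℝ) (a b : H) :
    ‖l • a + (1 - l) • b‖ ^ 2 = l * ‖a‖ ^ 2 + (1 - l) * ‖b‖ ^ 2 - l * (1 - l) * ‖a - b‖ ^ 2 := by
  rw [norm_add_sq_real, norm_sub_sq_real, norm_smul, norm_smul, real_inner_smul_left,
    real_inner_smul_right, mul_pow, mul_pow, Real.norm_eq_abs, Real.norm_eq_abs, sq_abs, sq_abs]
  ring

theorem mann_iterate_mem {C : Set H} {T : H → H} {lam : ℕ → ℝ} {x : ℕ → H}
    (hC : Convex ℝ C) (hT : Set.MapsTo T C C) (hx0 : x 0 ∈ C) (hlam : ∀ n, lam n ∈ Set.Icc 0 1)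
    (hx : ∀ n, x (n + 1) = lam n • x n + (1 - lam n) • T (x n)) (n : ℕ) : x n ∈ C := by
  induction n with
  | zero => exact hx0
  | succ n ih =>
    rw [hx]
    exact hC ih (hT ih) (hlam n).1 (sub_nonneg.mpr (hlam n).2) (add_sub_cancel _ _)

def IsStrictPseudoContractionOn (κ : ℝ) (T : H → H) (C : Set H) : Prop :=
  ∀ u ∈ C, ∀ v ∈ C, ‖T u - T v‖ ^ 2 ≤ ‖u - v‖ ^ 2 + κ * ‖(u - T u) - (v - T v)‖ ^ 2

namespace IsStrictPseudoContractionOn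

variable {κ : ℝ} {T : H → H} {C : Set H} (hT : IsStrictPseudoContractionOn κ T C)
include hT

theorem mul_norm_sub_sq_le_inner {u v : H} (hu : u ∈ C) (hv : v ∈ C) :
    (1 - κ) * ‖(u - T u) - (v - T v)‖ ^ 2 ≤ 2 * ⟪u - v, (u - T u) - (v - T v)⟫ := by
  have h := hT u hu v hv
  rw [show T u - T v = (u - v) - ((u - T u) - (v - T v)) by abel, norm_sub_sq_real] at h
  linarith

theorem norm_sub_sq_le_of_isFixedPt {u v p : H} {l : ℝ} (hu : u ∈ C) (hp : p ∈ C)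
    (hfix : Function.IsFixedPt T p) (hv : v = l • u + (1 - l) • T u) (hl : l ≤ 1) :
    ‖v - p‖ ^ 2 ≤ ‖u - p‖ ^ 2 - (l - κ) * (1 - l) * ‖u - T u‖ ^ 2 := by
  have hTu : ‖T u - p‖ ^ 2 ≤ ‖u - p‖ ^ 2 + κ * ‖u - T u‖ ^ 2 := by
    simpa [hfix.eq] using hT u hu p hp
  rw [show v - p = l • (u - p) + (1 - l) • (T u - p) by rw [hv]; module,
    norm_smul_add_one_sub_smul_sq, show u - p - (T u - p) = u - T u by abel]
  nlinarith [mul_le_mul_of_nonneg_left hTu (sub_nonneg.mpr hl)]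

theorem norm_sub_sq_le_of_mannStep {u v : H} {l : ℝ} (hu : u ∈ C) (hvC : v ∈ C)
    (hv : v = l • u + (1 - l) • T u) (hκl : κ ≤ l) (hl : l < 1) :
    ‖v - T v‖ ^ 2 ≤ ‖u - T u‖ ^ 2 := by
  have hmono := hT.mul_norm_sub_sq_le_inner hvC hu
  rw [show v - u = -((1 - l) • (u - T u)) by rw [hv]; module, inner_neg_left,
    real_inner_smul_left] at hmono
  rw [show v - T v = (u - T u) + ((v - T v) - (u - T u)) by abel, norm_add_sq_real]
  nlinarith [sq_nonneg ‖(v - T v) - (u - T u)‖]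

end IsStrictPseudoContractionOn

end InnerProductSpace

theorem stmt_13_general {H : Type*} [NormedAddCommGroup H] [InnerProductSpace ℝ H]
    (C : Set H) (hCconv : Convex ℝ C)
    (κ : ℝ) (hκ0 : 0 ≤ κ)
    (T : H → H) (hTmap : Set.MapsTo T C C)
    (hT : ∀ u ∈ C, ∀ v ∈ C,
      ‖T u - T v‖ ^ 2 ≤ ‖u - v‖ ^ 2 + κ * ‖(u - T u) - (v - T v)‖ ^ 2)
    (p : H) (hp : p ∈ C) (hfix : T p = p)
    (lam : ℕ → ℝ) (hlam : ∀ n, lam n ∈ Set.Ioo κ 1)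
    (hdiv : Filter.Tendsto
      (fun N : ℕ => ∑ n ∈ Finset.range N, (lam n - κ) * (1 - lam n))
      Filter.atTop Filter.atTop)
    (x : ℕ → H) (hx0 : x 0 ∈ C)
    (hxrec : ∀ n, x (n + 1) = lam n • x n + (1 - lam n) • T (x n)) :
    Filter.Tendsto (fun n => ‖x n - T (x n)‖) Filter.atTop (nhds 0) := by
  have hT : IsStrictPseudoContractionOn κ T C := hT
  have hmem : ∀ n, x n ∈ C := mann_iterate_mem hCconv hTmap hx0
    (fun n => ⟨hκ0.trans (hlam n).1.le, (hlam n).2.le⟩) hxrec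
  have hresidual : Antitone fun n => ‖x n - T (x n)‖ ^ 2 := antitone_nat_of_succ_le fun n =>
    hT.norm_sub_sq_le_of_mannStep (hmem n) (hmem (n + 1)) (hxrec n) (hlam n).1.le (hlam n).2
  have hfejer : ∀ n, ‖x (n + 1) - p‖ ^ 2
      ≤ ‖x n - p‖ ^ 2 - (lam n - κ) * (1 - lam n) * ‖x n - T (x n)‖ ^ 2 := fun n =>
    hT.norm_sub_sq_le_of_isFixedPt (hmem n) hp hfix (hxrec n) (hlam n).2.le
  have hweights : ∀ n, 0 ≤ (lam n - κ) * (1 - lam n) := fun n =>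
    mul_nonneg (sub_nonneg.mpr (hlam n).1.le) (sub_nonneg.mpr (hlam n).2.le)
  have hsq := tendsto_zero_of_antitone_of_sum_mul_le hresidual (fun n => sq_nonneg _) hweights
    (sum_mul_le_of_le_sub (a := fun n => ‖x n - p‖ ^ 2) (fun n => sq_nonneg _) hfejer) hdiv
  simpa [Real.sqrt_sq (norm_nonneg _)] using hsq.sqrt

theorem stmt_13 {H : Type*} [NormedAddCommGroup H] [InnerProductSpace ℝ H]
    (C : Set H) (hCne : C.Nonempty) (hCconv : Convex ℝ C)
    (κ : ℝ) (hκ0 : 0 ≤ κ) (hκ1 : κ < 1)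
    (T : H → H) (hTmap : Set.MapsTo T C C)
    (hT : ∀ u ∈ C, ∀ v ∈ C,
      ‖T u - T v‖ ^ 2 ≤ ‖u - v‖ ^ 2 + κ * ‖(u - T u) - (v - T v)‖ ^ 2)
    (p : H) (hp : p ∈ C) (hfix : T p = p)
    (lam : ℕ → ℝ) (hlam : ∀ n, lam n ∈ Set.Ioo κ 1)
    (hdiv : Filter.Tendsto
      (fun N : ℕ => ∑ n ∈ Finset.range N, (lam n - κ) * (1 - lam n))
      Filter.atTop Filter.atTop)
    (x : ℕ → H) (hx0 : x 0 ∈ C)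
    (hxrec : ∀ n, x (n + 1) = lam n • x n + (1 - lam n) • T (x n)) :
    Filter.Tendsto (fun n => ‖x n - T (x n)‖) Filter.atTop (nhds 0) :=
  stmt_13_general C hCconv κ hκ0 T hTmap hT p hp hfix lam hlam hdiv x hx0 hxrec
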